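/- arXiv:2307.15316 — 7 statements merged into one kernel-verified Lean document; each statement's English description precedes it below -/
import Mathlib

section
/- Unique stationary point of the per-block Lagrangian of the power-control problem: for all reals H > 0, N_0 > 0 and β > 0 there exists a unique p* > 0 satisfying β·(N_0 + p*H)·ln(1 + p*H/N_0) = H·(1 + βp*), and this p* is the unique global minimizer of φ(p) = (1 + βp)/ln(1 + pH/N_0) over p ∈ (0, ∞). -/
open Real Set

namespace USP

variable {H N0 β : ℝ}

lemma denom_pos (hH : 0 < H) (hN0 : 0 < N0) {p : ℝ} (hp : 0 ≤ p) :
    0 < N0 + p * H :=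
  add_pos_of_pos_of_nonneg hN0 (mul_nonneg hp hH.le)

lemma one_add_pos (hH : 0 < H) (hN0 : 0 < N0) {p : ℝ} (hp : 0 ≤ p) :
    0 < 1 + p * H / N0 := by positivity

lemma L_pos (hH : 0 < H) (hN0 : 0 < N0) {p : ℝ} (hp : 0 < p) :
    0 < Real.log (1 + p * H / N0) := by
  apply Real.log_pos
  have : 0 < p * H / N0 := by positivity
  linarith

lemma hasDerivAt_L (hH : 0 < H) (hN0 : 0 < N0) {p : ℝ} (hp : 0 ≤ p) :
    HasDerivAt (fun x : ℝ => Real.log (1 + x * H / N0)) (H / (N0 + p * H)) p := by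
  have h1 : HasDerivAt (fun x : ℝ => 1 + x * H / N0) (H / N0) p := by
    simpa [mul_div_assoc] using ((hasDerivAt_id p).mul_const (H / N0)).const_add 1
  have h2 := (Real.hasDerivAt_log (ne_of_gt (one_add_pos hH hN0 hp))).comp p h1
  refine h2.congr_deriv ?_
  have hd := denom_pos hH hN0 hp
  field_simp

lemma hasDerivAt_F (hH : 0 < H) (hN0 : 0 < N0) (hβ : 0 < β) {p : ℝ} (hp : 0 ≤ p) :
    HasDerivAt (fun x : ℝ => β * (N0 + x * H) * Real.log (1 + x * H / N0) - H * (1 + β * x))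
      (β * H * Real.log (1 + p * H / N0)) p := by
  have hA : HasDerivAt (fun x : ℝ => β * (N0 + x * H)) (β * H) p := by
    simpa using (((hasDerivAt_id p).mul_const H).const_add N0).const_mul β
  have hB : HasDerivAt (fun x : ℝ => H * (1 + β * x)) (H * β) p := by
    simpa using (((hasDerivAt_id p).const_mul β).const_add 1).const_mul H
  have h := (hA.mul (hasDerivAt_L hH hN0 hp)).sub hB
  refine h.congr_deriv ?_
  have hd := (denom_pos hH hN0 hp).ne'
  field_simp
  ring

lemma hasDerivAt_phi (hH : 0 < H) (hN0 : 0 < N0) (hβ : 0 < β) {p : ℝ} (hp : 0 < p) :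
    HasDerivAt (fun x : ℝ => (1 + β * x) / Real.log (1 + x * H / N0))
      ((β * (N0 + p * H) * Real.log (1 + p * H / N0) - H * (1 + β * p)) /
        ((N0 + p * H) * (Real.log (1 + p * H / N0)) ^ 2)) p := by
  have hnum : HasDerivAt (fun x : ℝ => 1 + β * x) β p := by
    simpa using ((hasDerivAt_id p).const_mul β).const_add 1
  have h := hnum.div (hasDerivAt_L hH hN0 hp.le) (L_pos hH hN0 hp).ne'
  refine h.congr_deriv ?_
  have hd := (denom_pos hH hN0 hp.le).ne'
  have hL := (L_pos hH hN0 hp).ne'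
  field_simp

lemma F_strictMono (hH : 0 < H) (hN0 : 0 < N0) (hβ : 0 < β) :
    StrictMonoOn (fun x : ℝ => β * (N0 + x * H) * Real.log (1 + x * H / N0) - H * (1 + β * x))
      (Ici 0) := by
  apply strictMonoOn_of_deriv_pos (convex_Ici 0)
  · exact fun x hx => (hasDerivAt_F hH hN0 hβ hx).continuousAt.continuousWithinAt
  · intro x hx
    rw [interior_Ici] at hx
    rw [(hasDerivAt_F hH hN0 hβ hx.le).deriv]
    exact mul_pos (mul_pos hβ hH) (L_pos hH hN0 hx)

end USP

/-- **Unique stationary point of the per-block Lagrangian.**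
For all reals `H > 0`, `N0 > 0`, `β > 0` there exists a unique `p* > 0` satisfying
`β * (N0 + p* * H) * ln(1 + p* * H / N0) = H * (1 + β * p*)`, and this `p*` is the
unique global minimizer of `φ(p) = (1 + β * p) / ln(1 + p * H / N0)` over `p ∈ (0, ∞)`. -/
theorem unique_stationary_point (H N0 β : ℝ)
    (hH : 0 < H) (hN0 : 0 < N0) (hβ : 0 < β) :
    (∃! p : ℝ, 0 < p ∧
        β * (N0 + p * H) * Real.log (1 + p * H / N0) = H * (1 + β * p)) ∧
    (∀ p : ℝ, (0 < p ∧
        β * (N0 + p * H) * Real.log (1 + p * H / N0) = H * (1 + β * p)) →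
      ∀ q : ℝ, 0 < q → q ≠ p →
        (1 + β * p) / Real.log (1 + p * H / N0)
          < (1 + β * q) / Real.log (1 + q * H / N0)) := by
  classical
  set F : ℝ → ℝ := fun x => β * (N0 + x * H) * Real.log (1 + x * H / N0) - H * (1 + β * x)
    with hFdef
  have hF_mono := USP.F_strictMono (β := β) hH hN0 hβ
  have hF0 : F 0 = -H := by simp [hFdef]
  -- a point where F is positive
  obtain ⟨P, hP0, hFP⟩ : ∃ P : ℝ, 0 < P ∧ 0 < F P := by
    refine ⟨max (1/β + 1) (N0 * (Real.exp 2 - 1) / H), ?_, ?_⟩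
    · have : (0:ℝ) < 1/β + 1 := by positivity
      exact lt_of_lt_of_le this (le_max_left _ _)
    · set P := max (1/β + 1) (N0 * (Real.exp 2 - 1) / H) with hPdef
      have hP1 : 1/β + 1 ≤ P := le_max_left _ _
      have hP2 : N0 * (Real.exp 2 - 1) / H ≤ P := le_max_right _ _
      have hPpos : 0 < P := lt_of_lt_of_le (by positivity) hP1
      have hβP : 1 + β ≤ β * P := by
        have h := mul_le_mul_of_nonneg_left hP1 hβ.le
        have : β * (1/β + 1) = 1 + β := by field_simp
        linarith
      have hL2 : 2 ≤ Real.log (1 + P * H / N0) := by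
        rw [show (2:ℝ) = Real.log (Real.exp 2) from (Real.log_exp 2).symm]
        apply Real.log_le_log (Real.exp_pos 2)
        have h1 : N0 * (Real.exp 2 - 1) ≤ P * H := (div_le_iff₀ hH).mp hP2
        have h2 : Real.exp 2 - 1 ≤ P * H / N0 := (le_div_iff₀ hN0).mpr (by linarith)
        linarith
      have hLpos := USP.L_pos hH hN0 hPpos (H := H) (N0 := N0)
      show 0 < β * (N0 + P * H) * Real.log (1 + P * H / N0) - H * (1 + β * P)
      nlinarith [mul_pos hβ hN0, mul_pos (mul_pos hβ hPpos) hH,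
        mul_le_mul_of_nonneg_left hL2 (le_of_lt (mul_pos hβ (USP.denom_pos hH hN0 hPpos.le))),
        mul_pos hβ hPpos]
  -- existence of root by IVT
  have hFcont : ContinuousOn F (Icc 0 P) :=
    fun x hx => (USP.hasDerivAt_F hH hN0 hβ hx.1).continuousAt.continuousWithinAt
  have h0mem : (0:ℝ) ∈ Ioo (F 0) (F P) := by
    constructor
    · rw [hF0]; linarith
    · exact hFP
  obtain ⟨p, hpmem, hFp⟩ := intermediate_value_Ioo hP0.le hFcont h0mem
  have hppos : 0 < p := hpmem.1
  -- key: sign of F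
  have hFneg : ∀ x : ℝ, 0 < x → x < p → F x < 0 := fun x hx hxp => by
    have h2 : F x < F p := hF_mono (le_of_lt hx) hppos.le hxp
    rw [hFp] at h2; exact h2
  have hFpos : ∀ x : ℝ, p < x → 0 < F x := fun x hxp => by
    have h2 : F p < F x := hF_mono hppos.le (hppos.trans hxp).le hxp
    rw [hFp] at h2; exact h2
  have huniq : ∀ q : ℝ, 0 < q ∧
      β * (N0 + q * H) * Real.log (1 + q * H / N0) = H * (1 + β * q) → q = p := by
    rintro q ⟨hq, hEq⟩
    have hFq : F q = 0 := by simp [hFdef]; linarith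
    by_contra hne
    rcases lt_or_gt_of_ne hne with h | h
    · exact absurd hFq (ne_of_lt (hFneg q hq h))
    · exact absurd hFq (ne_of_gt (hFpos q h))
  have hEqp : β * (N0 + p * H) * Real.log (1 + p * H / N0) = H * (1 + β * p) := by
    have : F p = 0 := hFp
    simp only [hFdef] at this
    linarith
  refine ⟨⟨p, ⟨hppos, hEqp⟩, huniq⟩, ?_⟩
  -- minimizer part
  rintro r hr q hq hqr
  have hrp : r = p := huniq r hr
  subst hrp
  set φ : ℝ → ℝ := fun x => (1 + β * x) / Real.log (1 + x * H / N0) with hφdef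
  show φ r < φ q
  rcases lt_or_gt_of_ne hqr with hlt | hgt
  · -- q < r : φ strictly decreasing on Ioc 0 r
    have hanti : StrictAntiOn φ (Ioc 0 r) := by
      apply strictAntiOn_of_deriv_neg (convex_Ioc 0 r)
      · exact fun x hx => (USP.hasDerivAt_phi hH hN0 hβ hx.1).continuousAt.continuousWithinAt
      · intro x hx
        rw [interior_Ioc] at hx
        rw [(USP.hasDerivAt_phi hH hN0 hβ hx.1).deriv]
        apply div_neg_of_neg_of_pos
        · exact hFneg x hx.1 hx.2
        · exact mul_pos (USP.denom_pos hH hN0 hx.1.le)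
            (pow_pos (USP.L_pos hH hN0 hx.1) 2)
    exact hanti ⟨hq, hlt.le⟩ ⟨hr.1, le_refl r⟩ hlt
  · -- r < q : φ strictly increasing on Ici r
    have hmono : StrictMonoOn φ (Ici r) := by
      apply strictMonoOn_of_deriv_pos (convex_Ici r)
      · intro x hx
        exact (USP.hasDerivAt_phi hH hN0 hβ (lt_of_lt_of_le hr.1 hx)).continuousAt.continuousWithinAt
      · intro x hx
        rw [interior_Ici] at hx
        have hx0 : 0 < x := hr.1.trans hx
        rw [(USP.hasDerivAt_phi hH hN0 hβ hx0).deriv]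
        apply div_pos
        · exact hFpos x hx
        · exact mul_pos (USP.denom_pos hH hN0 hx0.le)
            (pow_pos (USP.L_pos hH hN0 hx0) 2)
    exact hmono (le_refl r) hgt.le hgt
end

section
/- Closed-form per-block optimal power (Proposition 2, per-block form): for all reals H > 0, N_0 > 0, β > 0, Q > 0 and B > 0, there is a unique real w > −1 with w·e^w = (H − βN_0)/(βN_0·e). Setting p* = (N_0/H)·(e^{w+1} − 1), one has p* > 0, p* is the unique global minimizer of φ(p) = (1 + βp)/ln(1 + pH/N_0) over p ∈ (0, ∞), and the corresponding minimal latency satisfies Q/(B·log₂(1 + p*H/N_0)) = Q·ln 2/(B·(w + 1)). -/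
lemma lambert_strictMono : StrictMonoOn (fun x : ℝ => x * Real.exp x) (Set.Ici (-1)) := by
  apply strictMonoOn_of_deriv_pos (convex_Ici _)
  · exact (continuous_id.mul Real.continuous_exp).continuousOn
  · intro x hx
    rw [interior_Ici] at hx
    have hd : HasDerivAt (fun x : ℝ => x * Real.exp x)
        (1 * Real.exp x + x * Real.exp x) x :=
      (hasDerivAt_id x).mul (Real.hasDerivAt_exp x)
    rw [hd.deriv]
    have h1 : (-1 : ℝ) < x := hx
    nlinarith [Real.exp_pos x]

/-- **Closed-form per-block optimal power (Proposition 2, per-block form).**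
For all reals `H, N0, β, Q, B > 0`, there is a unique real `w > -1` with
`w * e^w = (H - β * N0) / (β * N0 * e)`.  Setting `p* = (N0/H) * (e^(w+1) - 1)`,
one has `p* > 0`, `p*` is the unique global minimizer of
`φ(p) = (1 + β * p) / ln(1 + p * H / N0)` over `p ∈ (0, ∞)`, and the corresponding
minimal latency satisfies `Q / (B * log₂(1 + p* * H / N0)) = Q * ln 2 / (B * (w + 1))`. -/
theorem closed_form_per_block_power (H N0 β Q B : ℝ)
    (hH : 0 < H) (hN0 : 0 < N0) (hβ : 0 < β) (hQ : 0 < Q) (hB : 0 < B) :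
    (∃! w : ℝ, -1 < w ∧
        w * Real.exp w = (H - β * N0) / (β * N0 * Real.exp 1)) ∧
    (∀ w : ℝ, (-1 < w ∧
        w * Real.exp w = (H - β * N0) / (β * N0 * Real.exp 1)) →
      0 < (N0 / H) * (Real.exp (w + 1) - 1) ∧
      (∀ q : ℝ, 0 < q → q ≠ (N0 / H) * (Real.exp (w + 1) - 1) →
        (1 + β * ((N0 / H) * (Real.exp (w + 1) - 1)))
            / Real.log (1 + ((N0 / H) * (Real.exp (w + 1) - 1)) * H / N0)
          < (1 + β * q) / Real.log (1 + q * H / N0)) ∧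
      Q / (B * Real.logb 2 (1 + ((N0 / H) * (Real.exp (w + 1) - 1)) * H / N0))
        = Q * Real.log 2 / (B * (w + 1))) := by
  have he1 : (0:ℝ) < Real.exp 1 := Real.exp_pos 1
  set c : ℝ := (H - β * N0) / (β * N0 * Real.exp 1) with hc_def
  have hden : 0 < β * N0 * Real.exp 1 := by positivity
  -- c > f(-1) = -exp(-1)
  have hclow : (-1 : ℝ) * Real.exp (-1) < c := by
    have h1 : Real.exp (-1) = (Real.exp 1)⁻¹ := by
      rw [Real.exp_neg]
    rw [h1, hc_def, lt_div_iff₀ hden]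
    have h2 : (Real.exp 1)⁻¹ * Real.exp 1 = 1 := inv_mul_cancel₀ (ne_of_gt he1)
    nlinarith [mul_pos hβ hN0]
  constructor
  · -- existence and uniqueness of w
    have hcont : ContinuousOn (fun x : ℝ => x * Real.exp x) (Set.Icc (-1) (max 1 c)) :=
      (continuous_id.mul Real.continuous_exp).continuousOn
    have hXge : (-1 : ℝ) ≤ max 1 c := le_trans (by norm_num) (le_max_left 1 c)
    have hfX : c ≤ (max 1 c) * Real.exp (max 1 c) := by
      have h0 : (0:ℝ) ≤ max 1 c := le_trans zero_le_one (le_max_left 1 c)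
      have h1 : (1:ℝ) ≤ Real.exp (max 1 c) := Real.one_le_exp h0
      calc c ≤ max 1 c := le_max_right 1 c
        _ = (max 1 c) * 1 := (mul_one _).symm
        _ ≤ (max 1 c) * Real.exp (max 1 c) := by
            exact mul_le_mul_of_nonneg_left h1 h0
    have hmem : c ∈ Set.Icc ((-1:ℝ) * Real.exp (-1)) ((max 1 c) * Real.exp (max 1 c)) :=
      ⟨le_of_lt hclow, hfX⟩
    obtain ⟨w, hw_mem, hw_eq⟩ := intermediate_value_Icc hXge hcont hmem
    have hw_gt : -1 < w := by
      rcases lt_or_eq_of_le hw_mem.1 with h | h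
      · exact h
      · exfalso; rw [← h] at hw_eq; exact absurd hw_eq (ne_of_lt hclow)
    refine ⟨w, ⟨hw_gt, hw_eq⟩, ?_⟩
    intro y hy
    exact lambert_strictMono.injOn (le_of_lt hy.1) (le_of_lt hw_gt) (hy.2.trans hw_eq.symm)
  · -- properties of p*
    rintro w ⟨hw1, hw2⟩
    have hu0 : 0 < w + 1 := by linarith
    have hE0 : (1:ℝ) < Real.exp (w + 1) := by
      have := Real.add_one_lt_exp (ne_of_gt hu0)
      linarith
    set p : ℝ := (N0 / H) * (Real.exp (w + 1) - 1) with hp_def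
    have hp_pos : 0 < p := by
      apply mul_pos (div_pos hN0 hH); linarith
    -- key algebraic identities
    have harg : 1 + p * H / N0 = Real.exp (w + 1) := by
      rw [hp_def]; field_simp; ring
    have hlogp : Real.log (1 + p * H / N0) = w + 1 := by
      rw [harg, Real.log_exp]
    -- key relation from the Lambert equation
    have key : (β * N0 / H) * Real.exp (w + 1) * w = 1 - β * N0 / H := by
      have h2 : w * Real.exp w * (β * N0 * Real.exp 1) = H - β * N0 := by
        rw [hw2, div_mul_cancel₀ _ (ne_of_gt hden)]
      have keyH : β * N0 * Real.exp (w + 1) * w = H - β * N0 := by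
        rw [Real.exp_add]; linear_combination h2
      field_simp
      linear_combination keyH
    refine ⟨hp_pos, ?_, ?_⟩
    · -- strict global minimality
      intro q hq hqne
      have hqarg : (0:ℝ) < 1 + q * H / N0 := by
        have : 0 < q * H / N0 := by positivity
        linarith
      set u : ℝ := Real.log (1 + q * H / N0) with hu_def
      have hu_pos : 0 < u := Real.log_pos (by
        have : 0 < q * H / N0 := by positivity
        linarith)
      have hexpu : Real.exp u = 1 + q * H / N0 := Real.exp_log hqarg
      have hq_eq : q = (N0 / H) * (Real.exp u - 1) := by
        rw [hexpu]; field_simp; ring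
      have hune : u ≠ w + 1 := by
        intro h
        apply hqne
        rw [hq_eq, h]
      set b : ℝ := β * N0 / H with hb_def
      have hb_pos : 0 < b := by positivity
      have hβp : 1 + β * p = 1 - b + b * Real.exp (w + 1) := by
        rw [hp_def, hb_def]; field_simp; ring
      have hβq : 1 + β * q = 1 - b + b * Real.exp u := by
        rw [hq_eq, hb_def]; field_simp; ring
      rw [hβp, hβq, hlogp]
      rw [div_lt_div_iff₀ hu0 hu_pos]
      have hexps : Real.exp u = Real.exp (w + 1) * Real.exp (u - (w + 1)) := by
        rw [← Real.exp_add]; ring_nf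
      have hone : u - (w + 1) + 1 < Real.exp (u - (w + 1)) :=
        Real.add_one_lt_exp (by intro h; apply hune; linarith)
      have hid : (1 - b + b * Real.exp u) * (w + 1) - (1 - b + b * Real.exp (w + 1)) * u
          = b * (w + 1) * Real.exp (w + 1) * (Real.exp (u - (w + 1)) - (u - (w + 1)) - 1) := by
        linear_combination (u - (w + 1)) * key + b * (w + 1) * hexps
      have hpos : 0 < b * (w + 1) * Real.exp (w + 1)
          * (Real.exp (u - (w + 1)) - (u - (w + 1)) - 1) :=
        mul_pos (mul_pos (mul_pos hb_pos hu0) (Real.exp_pos (w + 1))) (by linarith)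
      linarith [hid, hpos]
    · -- latency formula
      rw [Real.logb, hlogp]
      have hlog2 : (0:ℝ) < Real.log 2 := Real.log_pos (by norm_num)
      field_simp
end

section
/- Proposition 2 (optimal power control): let J be a nonempty finite set of broadcast blocks with equivalent channel gains H_j > 0 for j ∈ J, and let Q, B, N_0, E > 0. Suppose β* > 0, and for each j ∈ J let w_j > −1 be the unique real with w_j·e^{w_j} = (H_j − β*N_0)/(β*N_0·e); define p*_j = (N_0/H_j)·(e^{w_j+1} − 1) and T*_j = Q·ln 2/(B·(w_j + 1)). If Σ_{j∈J} T*_j·p*_j = E, then ({T*_j}, {p*_j}) is an optimal (latency-minimizing) solution of the problem: minimize Σ_{j∈J} T_j over reals T_j > 0, p_j > 0 subject to Q ≤ T_j·B·log₂(1 + p_jH_j/N_0) for every j ∈ J and Σ_{j∈J} T_j·p_j ≤ E. -/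
private lemma tangent_exp (x y : ℝ) : Real.exp y * (1 + x - y) ≤ Real.exp x := by
  have h := Real.add_one_le_exp (x - y)
  have hy := Real.exp_pos y
  have h2 : Real.exp y * ((x - y) + 1) ≤ Real.exp y * Real.exp (x - y) :=
    mul_le_mul_of_nonneg_left h hy.le
  rw [← Real.exp_add] at h2
  have hxy : y + (x - y) = x := by ring
  rw [hxy] at h2
  linarith

private lemma key_ineq (c β xs x : ℝ) (hc : 0 < c) (hβ : 0 < β) (hxs : 0 < xs)
    (hK : (xs - 1) * Real.exp xs = 1 / (β * c) - 1) :
    x * (c * (Real.exp xs - 1) + 1 / β) ≤ xs * (c * (Real.exp x - 1) + 1 / β) := by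
  have ht : Real.exp xs * (1 + x - xs) ≤ Real.exp x := tangent_exp x xs
  have h2 : 1 / β = c * (1 / (β * c)) := by field_simp
  have h3 : 1 / β = c * (1 + (xs - 1) * Real.exp xs) := by
    rw [h2, show (1:ℝ)/(β*c) = 1 + (xs-1)*Real.exp xs by linarith]
  have hprod : 0 ≤ (c * xs) * (Real.exp x - Real.exp xs * (1 + x - xs)) :=
    mul_nonneg (mul_pos hc hxs).le (by linarith)
  have heq : xs * (c * (Real.exp x - 1) + 1 / β) - x * (c * (Real.exp xs - 1) + 1 / β)
      = (c * xs) * (Real.exp x - Real.exp xs * (1 + x - xs)) := by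
    rw [h3]; ring
  linarith

private lemma perblock (c β a xs T p : ℝ) (hc : 0 < c) (hβ : 0 < β) (hxs : 0 < xs)
    (hT : 0 < T)
    (hK : (xs - 1) * Real.exp xs = 1 / (β * c) - 1)
    (hap : c * (Real.exp (a / T) - 1) ≤ p) :
    (a / xs) * (c * (Real.exp xs - 1)) + (a / xs) * (1 / β) ≤ T * p + T * (1 / β) := by
  have hkey := key_ineq c β xs (a / T) hc hβ hxs hK
  have h1 : (T / xs) * ((a / T) * (c * (Real.exp xs - 1) + 1 / β))
      ≤ (T / xs) * (xs * (c * (Real.exp (a / T) - 1) + 1 / β)) :=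
    mul_le_mul_of_nonneg_left hkey (by positivity)
  have e1 : (T / xs) * ((a / T) * (c * (Real.exp xs - 1) + 1 / β))
      = (a / xs) * (c * (Real.exp xs - 1)) + (a / xs) * (1 / β) := by
    field_simp
  have e2 : (T / xs) * (xs * (c * (Real.exp (a / T) - 1) + 1 / β))
      = T * (c * (Real.exp (a / T) - 1)) + T * (1 / β) := by
    field_simp
  have h4 : T * (c * (Real.exp (a / T) - 1)) ≤ T * p := mul_le_mul_of_nonneg_left hap hT.le
  rw [e1, e2] at h1
  linarith

/-- **Proposition 2 (optimal power control).**
Let `J` be a nonempty finite set of broadcast blocks with equivalent channel gains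
`H j > 0` for `j ∈ J`, and let `Q, B, N0, E > 0`.  Suppose `β* > 0`, and for each
`j ∈ J` let `w j > -1` be the (unique) real with
`w j * e^(w j) = (H j - β* * N0) / (β* * N0 * e)`; define
`p* j = (N0 / H j) * (e^(w j + 1) - 1)` and `T* j = Q * ln 2 / (B * (w j + 1))`.
If `Σ_{j∈J} T* j * p* j = E`, then `(T*, p*)` is an optimal (latency-minimizing)
solution of: minimize `Σ_{j∈J} T j` over reals `T j > 0`, `p j > 0` subject to
`Q ≤ T j * B * log₂(1 + p j * H j / N0)` for every `j ∈ J` and `Σ_{j∈J} T j * p j ≤ E`. -/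
theorem optimal_power_control {ι : Type*} (J : Finset ι) (hJ : J.Nonempty)
    (H : ι → ℝ) (hH : ∀ j ∈ J, 0 < H j)
    (Q B N0 E : ℝ) (hQ : 0 < Q) (hB : 0 < B) (hN0 : 0 < N0) (hE : 0 < E)
    (βstar : ℝ) (hβ : 0 < βstar)
    (w : ι → ℝ)
    (hw : ∀ j ∈ J, -1 < w j ∧
      w j * Real.exp (w j) = (H j - βstar * N0) / (βstar * N0 * Real.exp 1))
    (pstar Tstar : ι → ℝ)
    (hp : ∀ j ∈ J, pstar j = (N0 / H j) * (Real.exp (w j + 1) - 1))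
    (hT : ∀ j ∈ J, Tstar j = Q * Real.log 2 / (B * (w j + 1)))
    (henergy : ∑ j ∈ J, Tstar j * pstar j = E) :
    ((∀ j ∈ J, 0 < Tstar j) ∧ (∀ j ∈ J, 0 < pstar j) ∧
      (∀ j ∈ J, Q ≤ Tstar j * (B * Real.logb 2 (1 + pstar j * H j / N0))) ∧
      ∑ j ∈ J, Tstar j * pstar j ≤ E) ∧
    (∀ T p : ι → ℝ, (∀ j ∈ J, 0 < T j) → (∀ j ∈ J, 0 < p j) →
      (∀ j ∈ J, Q ≤ T j * (B * Real.logb 2 (1 + p j * H j / N0))) →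
      ∑ j ∈ J, T j * p j ≤ E →
      ∑ j ∈ J, Tstar j ≤ ∑ j ∈ J, T j) := by
  have hlog2 : 0 < Real.log 2 := Real.log_pos (by norm_num)
  set a : ℝ := Q * Real.log 2 / B with ha_def
  have ha : 0 < a := by positivity
  -- basic facts per block
  have hxs : ∀ j ∈ J, 0 < w j + 1 := fun j hj => by linarith [(hw j hj).1]
  have hTpos : ∀ j ∈ J, 0 < Tstar j := by
    intro j hj; rw [hT j hj]
    have := hxs j hj; positivity
  have hexp_gt : ∀ j ∈ J, 1 < Real.exp (w j + 1) := by
    intro j hj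
    have h := Real.add_one_le_exp (w j + 1)
    have := hxs j hj; linarith
  have hppos : ∀ j ∈ J, 0 < pstar j := by
    intro j hj; rw [hp j hj]
    have h1 := hH j hj
    have h2 := hexp_gt j hj
    have : 0 < N0 / H j := by positivity
    nlinarith
  -- the argument of logb for the candidate equals exp (w j + 1)
  have harg : ∀ j ∈ J, 1 + pstar j * H j / N0 = Real.exp (w j + 1) := by
    intro j hj
    rw [hp j hj]
    have h1 := (hH j hj).ne'
    field_simp
    ring
  have hrate : ∀ j ∈ J, Q ≤ Tstar j * (B * Real.logb 2 (1 + pstar j * H j / N0)) := by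
    intro j hj
    rw [harg j hj, hT j hj, Real.logb, Real.log_exp]
    have h1 := hxs j hj
    rw [show Q * Real.log 2 / (B * (w j + 1)) * (B * ((w j + 1) / Real.log 2)) = Q by
      field_simp]
  -- key constant per block
  have hK : ∀ j ∈ J, (w j + 1 - 1) * Real.exp (w j + 1) = 1 / (βstar * (N0 / H j)) - 1 := by
    intro j hj
    have h := (hw j hj).2
    have hH' := hH j hj
    have he : Real.exp (w j + 1) = Real.exp (w j) * Real.exp 1 := by rw [Real.exp_add]
    have hne : βstar * N0 * Real.exp 1 ≠ 0 := by positivity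
    have h' : w j * Real.exp (w j) * (βstar * N0 * Real.exp 1) = H j - βstar * N0 := by
      rw [h]; field_simp
    rw [he, show w j + 1 - 1 = w j from by ring]
    have h1 : 1 / (βstar * (N0 / H j)) = H j / (βstar * N0) := by
      field_simp
    rw [h1]
    rw [eq_sub_iff_add_eq, eq_div_iff (ne_of_gt (by positivity : (0:ℝ) < βstar * N0))]
    nlinarith [h']
  -- Tstar j = a / (w j + 1), and Tstar j * pstar j in canonical form
  have hTa : ∀ j ∈ J, Tstar j = a / (w j + 1) * 1 := by
    intro j hj; rw [hT j hj, ha_def]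
    have h1 := (hxs j hj).ne'
    field_simp
  constructor
  · exact ⟨hTpos, hppos, hrate, le_of_eq henergy⟩
  · intro T p hTp hpp hr he
    -- per-block lower bound on feasible energy + time
    have hmain : ∀ j ∈ J,
        Tstar j * pstar j + Tstar j * (1 / βstar) ≤ T j * p j + T j * (1 / βstar) := by
      intro j hj
      have hH' := hH j hj
      have hc : 0 < N0 / H j := by positivity
      have hxs' := hxs j hj
      have hT' := hTp j hj
      have hp' := hpp j hj
      -- feasibility gives p j ≥ c (exp (a / T j) - 1)
      have hap : (N0 / H j) * (Real.exp (a / T j) - 1) ≤ p j := by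
        have hr' := hr j hj
        have hgt : 0 < 1 + p j * H j / N0 := by positivity
        -- from Q ≤ T j * B * logb, get a / T j ≤ log (1 + p j H j / N0)
        have h0 : Q * Real.log 2 ≤ T j * B * Real.log (1 + p j * H j / N0) := by
          rw [Real.logb] at hr'
          have h1 := mul_le_mul_of_nonneg_right hr' hlog2.le
          have h2 : T j * (B * (Real.log (1 + p j * H j / N0) / Real.log 2)) * Real.log 2
              = T j * B * Real.log (1 + p j * H j / N0) := by
            field_simp
          linarith [h2 ▸ h1]
        have hlb : a / T j ≤ Real.log (1 + p j * H j / N0) := by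
          rw [ha_def, div_div, div_le_iff₀ (by positivity : (0:ℝ) < B * T j)]
          exact le_trans h0 (le_of_eq (by ring))
        have := Real.exp_le_exp.mpr hlb
        rw [Real.exp_log hgt] at this
        have h2 : (N0 / H j) * (Real.exp (a / T j) - 1) ≤ (N0 / H j) * (p j * H j / N0) := by
          apply mul_le_mul_of_nonneg_left _ hc.le
          linarith
        have h3 : (N0 / H j) * (p j * H j / N0) = p j := by field_simp
        rw [h3] at h2
        exact h2
      have hpb := perblock (N0 / H j) βstar a (w j + 1) (T j) (p j) hc hβ hxs' hT'
        (hK j hj) hap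
      -- rewrite Tstar j * pstar j
      have e3 : Tstar j * pstar j = (a / (w j + 1)) * ((N0 / H j) * (Real.exp (w j + 1) - 1)) := by
        rw [hp j hj, hTa j hj]; ring
      have e4 : Tstar j = a / (w j + 1) := by rw [hTa j hj]; ring
      rw [e3, e4]
      exact hpb
    have hsum := Finset.sum_le_sum hmain
    rw [Finset.sum_add_distrib, Finset.sum_add_distrib, henergy] at hsum
    have h5 : ∑ j ∈ J, Tstar j * (1 / βstar) = (∑ j ∈ J, Tstar j) * (1 / βstar) := by
      rw [← Finset.sum_mul]
    have h6 : ∑ j ∈ J, T j * (1 / βstar) = (∑ j ∈ J, T j) * (1 / βstar) := by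
      rw [← Finset.sum_mul]
    rw [h5, h6] at hsum
    have hβinv : 0 < 1 / βstar := by positivity
    nlinarith [hsum, he]
end

section
/- Existence and uniqueness of the optimal Lagrange multiplier (equation (12)): let J be a nonempty finite set with channel gains H_j > 0 for j ∈ J, and let Q, B, N_0 > 0. For each β > 0 and j ∈ J let w_j(β) > −1 be the unique real with w_j(β)·e^{w_j(β)} = (H_j − βN_0)/(βN_0·e), and define the total consumed energy F(β) = (Q·N_0·ln 2/B)·Σ_{j∈J} (e^{w_j(β)+1} − 1)/(H_j·(w_j(β) + 1)). Then for every E > (Q·N_0·ln 2/B)·Σ_{j∈J} 1/H_j there exists exactly one β* > 0 with F(β*) = E. -/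
open Real Set

private lemma auxTMono : StrictMonoOn (fun x : ℝ => x * Real.exp x) (Set.Ici (-1 : ℝ)) := by
  apply strictMonoOn_of_deriv_pos (convex_Ici _)
  · exact (continuous_id.mul Real.continuous_exp).continuousOn
  · intro x hx
    rw [interior_Ici, mem_Ioi] at hx
    have hd : HasDerivAt (fun x : ℝ => x * Real.exp x) ((x + 1) * Real.exp x) x := by
      have := (hasDerivAt_id x).mul (Real.hasDerivAt_exp x)
      exact this.congr_deriv (by simp only [id_eq]; ring)
    rw [hd.deriv]
    have h1 : 0 < x + 1 := by linarith
    exact mul_pos h1 (Real.exp_pos x)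

private lemma auxDPos {u : ℝ} (hu : -1 < u) : 0 < u * Real.exp (u + 1) + 1 := by
  have h1 : (-1 : ℝ) * Real.exp (-1) < u * Real.exp u :=
    auxTMono (self_mem_Ici) (mem_Ici.mpr hu.le) hu
  have h2 : (-1 : ℝ) * Real.exp (-1) * Real.exp 1 < u * Real.exp u * Real.exp 1 :=
    mul_lt_mul_of_pos_right h1 (Real.exp_pos 1)
  have h3 : (-1 : ℝ) * Real.exp (-1) * Real.exp 1 = -1 := by
    rw [mul_assoc, ← Real.exp_add]; norm_num
  have h4 : u * Real.exp (u + 1) = u * Real.exp u * Real.exp 1 := by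
    rw [Real.exp_add, mul_assoc]
  linarith

private lemma auxPsiPos {x : ℝ} (hx : 0 < x) : 0 < (x - 1) * Real.exp x + 1 := by
  have hmono : StrictMonoOn (fun x : ℝ => (x - 1) * Real.exp x + 1) (Set.Ici 0) := by
    apply strictMonoOn_of_deriv_pos (convex_Ici _)
    · exact (((continuous_id.sub continuous_const).mul Real.continuous_exp).add
        continuous_const).continuousOn
    · intro y hy
      rw [interior_Ici, mem_Ioi] at hy
      have hd : HasDerivAt (fun x : ℝ => (x - 1) * Real.exp x + 1) (y * Real.exp y) y := by
        have h1 : HasDerivAt (fun x : ℝ => x - 1) 1 y := (hasDerivAt_id y).sub_const 1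
        have := (h1.mul (Real.hasDerivAt_exp y)).add_const 1
        exact this.congr_deriv (by ring)
      rw [hd.deriv]
      exact mul_pos hy (Real.exp_pos y)
  have := hmono self_mem_Ici (mem_Ici.mpr hx.le) hx
  simp only [Real.exp_zero] at this
  linarith

private lemma auxGMono : StrictMonoOn (fun x : ℝ => (Real.exp x - 1) / x) (Set.Ioi 0) := by
  apply strictMonoOn_of_deriv_pos (convex_Ioi _)
  · exact ContinuousOn.div ((Real.continuous_exp.sub continuous_const).continuousOn)
      continuous_id.continuousOn (fun x hx => ne_of_gt (mem_Ioi.mp hx))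
  · intro x hx
    rw [interior_Ioi, mem_Ioi] at hx
    have hd : HasDerivAt (fun x : ℝ => (Real.exp x - 1) / x)
        ((Real.exp x * x - (Real.exp x - 1) * 1) / x ^ 2) x := by
      exact ((Real.hasDerivAt_exp x).sub_const 1).div (hasDerivAt_id x) (ne_of_gt hx)
    rw [hd.deriv]
    have hnum : Real.exp x * x - (Real.exp x - 1) * 1 = (x - 1) * Real.exp x + 1 := by ring
    rw [hnum]
    exact div_pos (auxPsiPos hx) (by positivity)

private lemma auxGLower {x : ℝ} (hx : 0 < x) : 1 + x / 4 ≤ (Real.exp x - 1) / x := by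
  rw [le_div_iff₀ hx]
  have h := Real.add_one_le_exp (x / 2)
  have h2 : Real.exp x = Real.exp (x / 2) * Real.exp (x / 2) := by
    rw [← Real.exp_add]; ring_nf
  have h3 : (x / 2 + 1) * (x / 2 + 1) ≤ Real.exp (x / 2) * Real.exp (x / 2) :=
    mul_le_mul h h (by linarith) (Real.exp_pos _).le
  nlinarith

private lemma auxGUpper {x : ℝ} (hx : 0 < x) : (Real.exp x - 1) / x ≤ Real.exp x := by
  rw [div_le_iff₀ hx]
  have h := Real.add_one_le_exp (-x)
  have h2 : Real.exp (-x) * Real.exp x = 1 := by rw [← Real.exp_add]; simp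
  nlinarith [Real.exp_pos x, mul_le_mul_of_nonneg_right h (Real.exp_pos x).le]

private lemma auxGPos {x : ℝ} (hx : 0 < x) : 0 < (Real.exp x - 1) / x := by
  have := Real.add_one_le_exp x
  exact div_pos (by linarith) hx

/-- **Existence and uniqueness of the optimal Lagrange multiplier (equation (12)).**
Let `J` be a nonempty finite set with channel gains `H j > 0` for `j ∈ J`, and let
`Q, B, N0 > 0`.  For each `β > 0` and `j ∈ J` let `w β j > -1` be the unique real
with `w β j * e^(w β j) = (H j - β * N0) / (β * N0 * e)`, and define the total
consumed energy `F(β) = (Q * N0 * ln 2 / B) * Σ_{j∈J} (e^(w β j + 1) - 1) / (H j * (w β j + 1))`.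
Then for every `E > (Q * N0 * ln 2 / B) * Σ_{j∈J} 1 / H j` there exists exactly one
`β* > 0` with `F(β*) = E`. -/
theorem optimal_multiplier_exists_unique {ι : Type*} (J : Finset ι) (hJ : J.Nonempty)
    (H : ι → ℝ) (hH : ∀ j ∈ J, 0 < H j)
    (Q B N0 : ℝ) (hQ : 0 < Q) (hB : 0 < B) (hN0 : 0 < N0)
    (w : ℝ → ι → ℝ)
    (hw : ∀ β : ℝ, 0 < β → ∀ j ∈ J, -1 < w β j ∧
      w β j * Real.exp (w β j) = (H j - β * N0) / (β * N0 * Real.exp 1))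
    (E : ℝ) (hE : (Q * N0 * Real.log 2 / B) * ∑ j ∈ J, 1 / H j < E) :
    ∃! β : ℝ, 0 < β ∧
      (Q * N0 * Real.log 2 / B) *
        ∑ j ∈ J, (Real.exp (w β j + 1) - 1) / (H j * (w β j + 1)) = E := by
  set C : ℝ := Q * N0 * Real.log 2 / B with hCdef
  have hC : 0 < C := by
    have := Real.log_pos (by norm_num : (1:ℝ) < 2)
    positivity
  -- strict antitonicity of w in β
  have hanti : ∀ j ∈ J, ∀ β1 β2 : ℝ, 0 < β1 → β1 < β2 → w β2 j < w β1 j := by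
    intro j hj β1 β2 hβ1 h12
    have hβ2 : 0 < β2 := hβ1.trans h12
    obtain ⟨hw1, he1⟩ := hw β1 hβ1 j hj
    obtain ⟨hw2, he2⟩ := hw β2 hβ2 j hj
    have hHj := hH j hj
    have he := Real.exp_pos 1
    have hlt : (H j - β2 * N0) / (β2 * N0 * Real.exp 1)
        < (H j - β1 * N0) / (β1 * N0 * Real.exp 1) := by
      rw [div_lt_div_iff₀ (by positivity) (by positivity)]
      nlinarith [mul_pos (mul_pos hHj hN0) he, mul_pos (mul_pos (mul_pos hHj hN0) he)
        (sub_pos.mpr h12)]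
    by_contra hle
    push_neg at hle
    have hm : w β1 j * Real.exp (w β1 j) ≤ w β2 j * Real.exp (w β2 j) :=
      auxTMono.monotoneOn (mem_Ici.mpr hw1.le) (mem_Ici.mpr hw2.le) hle
    rw [he1, he2] at hm
    linarith
  -- surjectivity of w in β
  have hsurj : ∀ j ∈ J, ∀ u : ℝ, -1 < u → ∃ β : ℝ, 0 < β ∧ w β j = u := by
    intro j hj u hu
    have hHj := hH j hj
    have hD := auxDPos hu
    set β := H j / (N0 * (u * Real.exp (u + 1) + 1)) with hβdef
    have hβ : 0 < β := by positivity
    refine ⟨β, hβ, ?_⟩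
    obtain ⟨hw1, he1⟩ := hw β hβ j hj
    have key : (H j - β * N0) / (β * N0 * Real.exp 1) = u * Real.exp u := by
      rw [hβdef]
      have hexp : Real.exp (u + 1) = Real.exp u * Real.exp 1 := Real.exp_add u 1
      rw [div_eq_iff (by positivity)]
      field_simp
      rw [hexp]
      ring
    have heq : w β j * Real.exp (w β j) = u * Real.exp u := he1.trans key
    exact auxTMono.injOn (mem_Ici.mpr hw1.le) (mem_Ici.mpr hu.le) heq
  -- continuity of w in β
  have hcont : ∀ j ∈ J, ∀ a : ℝ, 0 < a → ContinuousAt (fun β => w β j) a := by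
    intro j hj a ha
    have hmono : StrictMonoOn (fun β => -(w β j)) (Ioi 0) := by
      intro β1 h1 β2 h2 h12
      have h := hanti j hj β1 β2 (mem_Ioi.mp h1) h12
      simpa using neg_lt_neg h
    have hwa := (hw a ha j hj).1
    have himg : (fun β => -(w β j)) '' (Ioi 0) ∈ nhds (-(w a j)) := by
      refine Filter.mem_of_superset (Iio_mem_nhds (by linarith : -(w a j) < 1)) ?_
      intro y hy
      obtain ⟨β, hβ, hwβ⟩ := hsurj j hj (-y) (by simpa using neg_lt_neg (mem_Iio.mp hy))
      exact ⟨β, mem_Ioi.mpr hβ, by show -w β j = y; rw [hwβ]; ring⟩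
    have hca := hmono.continuousAt_of_image_mem_nhds (Ioi_mem_nhds ha) himg
    have := hca.neg
    simpa only [Pi.neg_def, neg_neg] using this
  -- strict antitonicity of the sum
  have hSanti : ∀ β1 β2 : ℝ, 0 < β1 → β1 < β2 →
      (∑ j ∈ J, (Real.exp (w β2 j + 1) - 1) / (H j * (w β2 j + 1))) <
      (∑ j ∈ J, (Real.exp (w β1 j + 1) - 1) / (H j * (w β1 j + 1))) := by
    intro β1 β2 hβ1 h12
    apply Finset.sum_lt_sum_of_nonempty hJ
    intro j hj
    have hHj := hH j hj
    have hw1 := (hw β1 hβ1 j hj).1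
    have hw2 := (hw β2 (hβ1.trans h12) j hj).1
    have hlt := hanti j hj β1 β2 hβ1 h12
    have hg : (Real.exp (w β2 j + 1) - 1) / (w β2 j + 1)
        < (Real.exp (w β1 j + 1) - 1) / (w β1 j + 1) :=
      auxGMono (mem_Ioi.mpr (by linarith)) (mem_Ioi.mpr (by linarith)) (by linarith)
    have e1 : (Real.exp (w β2 j + 1) - 1) / (H j * (w β2 j + 1))
        = ((Real.exp (w β2 j + 1) - 1) / (w β2 j + 1)) / H j := by
      rw [div_div, mul_comm]
    have e2 : (Real.exp (w β1 j + 1) - 1) / (H j * (w β1 j + 1))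
        = ((Real.exp (w β1 j + 1) - 1) / (w β1 j + 1)) / H j := by
      rw [div_div, mul_comm]
    rw [e1, e2]
    exact (div_lt_div_iff_of_pos_right hHj).mpr hg
  -- upper point : β_hi with F β_hi ≤ E
  set L : ℝ := C * ∑ j ∈ J, 1 / H j with hLdef
  have hLsum : 0 < ∑ j ∈ J, 1 / H j := by
    apply Finset.sum_pos (fun j hj => by have := hH j hj; positivity) hJ
  have hL : 0 < L := mul_pos hC hLsum
  have hEL : 1 < E / L := (one_lt_div hL).mpr hE
  set u : ℝ := Real.log (E / L) - 1 with hudef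
  have hu1 : 0 < u + 1 := by
    have := Real.log_pos hEL
    simp only [hudef]; linarith
  have hu : -1 < u := by linarith
  have hDu := auxDPos hu
  set D : ℝ := u * Real.exp (u + 1) + 1 with hDdef
  set βhi : ℝ := 1 + ∑ j ∈ J, H j / (N0 * D) with hβhidef
  have hsum_nonneg : (0:ℝ) ≤ ∑ j ∈ J, H j / (N0 * D) :=
    Finset.sum_nonneg (fun j hj => by have := hH j hj; positivity)
  have hβhi : 0 < βhi := by rw [hβhidef]; linarith
  have hβhi_ge : ∀ j ∈ J, H j / (N0 * D) ≤ βhi := by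
    intro j hj
    have := Finset.single_le_sum (f := fun j => H j / (N0 * D))
      (fun i hi => by have := hH i hi; positivity) hj
    rw [hβhidef]; linarith
  have hwhi_le : ∀ j ∈ J, w βhi j ≤ u := by
    intro j hj
    have hHj := hH j hj
    obtain ⟨hwj, hej⟩ := hw βhi hβhi j hj
    have hDle : H j ≤ βhi * (N0 * D) := by
      have := hβhi_ge j hj
      rwa [div_le_iff₀ (by positivity)] at this
    have hexp : Real.exp (u + 1) = Real.exp u * Real.exp 1 := Real.exp_add u 1
    have hkey : (H j - βhi * N0) / (βhi * N0 * Real.exp 1) ≤ u * Real.exp u := by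
      rw [div_le_iff₀ (by positivity)]
      rw [hDdef, hexp] at hDle
      nlinarith [Real.exp_pos 1, mul_pos hβhi hN0]
    by_contra hgt
    push_neg at hgt
    have h5 : u * Real.exp u < w βhi j * Real.exp (w βhi j) :=
      auxTMono (mem_Ici.mpr hu.le) (mem_Ici.mpr hwj.le) hgt
    rw [hej] at h5
    linarith [hkey]
  have hFhi : C * (∑ j ∈ J, (Real.exp (w βhi j + 1) - 1) / (H j * (w βhi j + 1))) ≤ E := by
    have hterm : ∀ j ∈ J, (Real.exp (w βhi j + 1) - 1) / (H j * (w βhi j + 1))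
        ≤ (E / L) * (1 / H j) := by
      intro j hj
      have hHj := hH j hj
      obtain ⟨hwj, _⟩ := hw βhi hβhi j hj
      have hx : 0 < w βhi j + 1 := by linarith
      have hle : w βhi j + 1 ≤ u + 1 := by have := hwhi_le j hj; linarith
      have h1 : (Real.exp (w βhi j + 1) - 1) / (w βhi j + 1)
          ≤ (Real.exp (u + 1) - 1) / (u + 1) :=
        auxGMono.monotoneOn (mem_Ioi.mpr hx) (mem_Ioi.mpr hu1) hle
      have h2 : (Real.exp (u + 1) - 1) / (u + 1) ≤ Real.exp (u + 1) := auxGUpper hu1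
      have h3 : Real.exp (u + 1) = E / L := by
        rw [hudef]; rw [show Real.log (E / L) - 1 + 1 = Real.log (E / L) by ring]
        exact Real.exp_log (by positivity)
      have e1 : (Real.exp (w βhi j + 1) - 1) / (H j * (w βhi j + 1))
          = ((Real.exp (w βhi j + 1) - 1) / (w βhi j + 1)) / H j := by
        rw [div_div, mul_comm]
      rw [e1]
      rw [div_le_iff₀ hHj]
      have : (E / L) * (1 / H j) * H j = E / L := by field_simp
      rw [this]
      linarith
    have hsum : (∑ j ∈ J, (Real.exp (w βhi j + 1) - 1) / (H j * (w βhi j + 1)))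
        ≤ ∑ j ∈ J, (E / L) * (1 / H j) := Finset.sum_le_sum hterm
    have : ∑ j ∈ J, (E / L) * (1 / H j) = (E / L) * ∑ j ∈ J, 1 / H j := by
      rw [Finset.mul_sum]
    rw [this] at hsum
    calc C * (∑ j ∈ J, (Real.exp (w βhi j + 1) - 1) / (H j * (w βhi j + 1)))
        ≤ C * ((E / L) * ∑ j ∈ J, 1 / H j) := by
          exact mul_le_mul_of_nonneg_left hsum hC.le
      _ = (E / L) * L := by rw [hLdef]; ring
      _ = E := div_mul_cancel₀ E hL.ne'
  -- lower point : β_lo with F β_lo ≥ E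
  obtain ⟨j0, hj0⟩ := hJ
  have hHj0 := hH j0 hj0
  set M : ℝ := E * H j0 / C with hMdef
  set u' : ℝ := max 0 (4 * M) with hu'def
  have hu'0 : (0:ℝ) ≤ u' := le_max_left _ _
  have hu' : -1 < u' := by linarith
  obtain ⟨βlo, hβlo, hwlo⟩ := hsurj j0 hj0 u' hu'
  have hFlo : E ≤ C * (∑ j ∈ J, (Real.exp (w βlo j + 1) - 1) / (H j * (w βlo j + 1))) := by
    have hnonneg : ∀ j ∈ J, 0 ≤ (Real.exp (w βlo j + 1) - 1) / (H j * (w βlo j + 1)) := by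
      intro j hj
      have hHj := hH j hj
      have hwj := (hw βlo hβlo j hj).1
      have hx : 0 < w βlo j + 1 := by linarith
      have := auxGPos hx
      have e1 : (Real.exp (w βlo j + 1) - 1) / (H j * (w βlo j + 1))
          = ((Real.exp (w βlo j + 1) - 1) / (w βlo j + 1)) / H j := by
        rw [div_div, mul_comm]
      rw [e1]; positivity
    have hsingle : (Real.exp (w βlo j0 + 1) - 1) / (H j0 * (w βlo j0 + 1))
        ≤ ∑ j ∈ J, (Real.exp (w βlo j + 1) - 1) / (H j * (w βlo j + 1)) :=
      Finset.single_le_sum hnonneg hj0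
    have hx : 0 < u' + 1 := by linarith
    have hlow : 1 + (u' + 1) / 4 ≤ (Real.exp (u' + 1) - 1) / (u' + 1) := auxGLower hx
    have hM : M ≤ (Real.exp (u' + 1) - 1) / (u' + 1) := by
      have h4M : 4 * M ≤ u' := le_max_right _ _
      nlinarith
    have hterm : M / H j0 ≤ (Real.exp (w βlo j0 + 1) - 1) / (H j0 * (w βlo j0 + 1)) := by
      rw [hwlo]
      have e1 : (Real.exp (u' + 1) - 1) / (H j0 * (u' + 1))
          = ((Real.exp (u' + 1) - 1) / (u' + 1)) / H j0 := by
        rw [div_div, mul_comm]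
      rw [e1]
      exact (div_le_div_iff_of_pos_right hHj0).mpr hM
    have hMH : M / H j0 = E / C := by rw [hMdef]; field_simp
    calc E = C * (E / C) := by rw [mul_comm, div_mul_cancel₀ E hC.ne']
      _ = C * (M / H j0) := by rw [hMH]
      _ ≤ C * (∑ j ∈ J, (Real.exp (w βlo j + 1) - 1) / (H j * (w βlo j + 1))) := by
          apply mul_le_mul_of_nonneg_left _ hC.le
          exact hterm.trans hsingle
  -- continuity of F
  set Fn : ℝ → ℝ := fun β => C * ∑ j ∈ J, (Real.exp (w β j + 1) - 1) / (H j * (w β j + 1))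
    with hFndef
  have hFcont : ∀ a : ℝ, 0 < a → ContinuousAt Fn a := by
    intro a ha
    apply ContinuousAt.mul continuousAt_const
    have : ∀ j ∈ J, ContinuousAt
        (fun β => (Real.exp (w β j + 1) - 1) / (H j * (w β j + 1))) a := by
      intro j hj
      have hHj := hH j hj
      have hwj := (hw a ha j hj).1
      have hc := hcont j hj a ha
      have hden : H j * (w a j + 1) ≠ 0 := ne_of_gt (mul_pos hHj (by linarith))
      exact ((Real.continuous_exp.continuousAt.comp (hc.add continuousAt_const)).sub
        continuousAt_const).div (continuousAt_const.mul (hc.add continuousAt_const)) hden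
    exact tendsto_finset_sum J this
  -- F strictly antitone (with the constant)
  have hFanti : ∀ β1 β2 : ℝ, 0 < β1 → β1 < β2 → Fn β2 < Fn β1 := by
    intro β1 β2 hβ1 h12
    exact mul_lt_mul_of_pos_left (hSanti β1 β2 hβ1 h12) hC
  -- existence via IVT
  have hexists : ∃ β : ℝ, 0 < β ∧ Fn β = E := by
    rcases le_or_gt βlo βhi with hle | hlt
    · have hco : ContinuousOn Fn (Icc βlo βhi) := fun x hx =>
        (hFcont x (lt_of_lt_of_le hβlo hx.1)).continuousWithinAt
      have hIcc := intermediate_value_Icc' hle hco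
      have hEmem : E ∈ Icc (Fn βhi) (Fn βlo) := ⟨hFhi, hFlo⟩
      obtain ⟨β, hβmem, hFβ⟩ := hIcc hEmem
      exact ⟨β, lt_of_lt_of_le hβlo hβmem.1, hFβ⟩
    · exfalso
      have h1 : Fn βhi ≤ E := hFhi
      have h2 : E ≤ Fn βlo := hFlo
      have := hFanti βhi βlo hβhi hlt
      linarith
  obtain ⟨β, hβpos, hFβ⟩ := hexists
  refine ⟨β, ⟨hβpos, hFβ⟩, ?_⟩
  rintro y ⟨hy, hyE⟩
  have hy' : Fn y = E := hyE
  rcases lt_trichotomy y β with h | h | h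
  · exfalso
    have := hFanti y β hy h
    rw [hy', hFβ] at this
    exact lt_irrefl E this
  · exact h
  · exfalso
    have := hFanti β y hβpos h
    rw [hy', hFβ] at this
    exact lt_irrefl E this
end

section
/- Binding rate constraints at the optimum: assume Q, B, N_0 > 0 and H_{i,n} > 0 for every broadcast block. If ({T*_{i,n}}, {p*_{i,n}}) is an optimal solution of problem (P3.1), then for every broadcast block (i,n) the rate constraint holds with equality: T*_{i,n}·B·log₂(1 + p*_{i,n}H_{i,n}/N_0) = Q. -/
noncomputable section

/-- Binary indicators. -/
def IsBinary {K N : ℕ} (α : Fin (K+1) → Fin (N+1) → Fin (K+1) → ℝ) : Prop :=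
  ∀ i n k, α i n k = 0 ∨ α i n k = 1

/-- Block `(i,n)` is broadcast iff some device requests it, i.e. `α* i n = max_k α* i n k = 1`. -/
def Broadcast {K N : ℕ} (α : Fin (K+1) → Fin (N+1) → Fin (K+1) → ℝ)
    (i : Fin (K+1)) (n : Fin (N+1)) : Prop :=
  ∃ k, α i n k = 1

/-- Feasibility for problem (P3.1): nonnegative latencies and powers, the rate
constraint `Q ≤ T_{i,n} * B * log₂(1 + p_{i,n} H_{i,n} / N0)` for every broadcast
block, and the total energy budget. -/
def P31Feasible {K N : ℕ} (Q B N0 E : ℝ)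
    (α : Fin (K+1) → Fin (N+1) → Fin (K+1) → ℝ)
    (Heq : Fin (K+1) → Fin (N+1) → ℝ)
    (T p : Fin (K+1) → Fin (N+1) → ℝ) : Prop :=
  (∀ i n, 0 ≤ T i n) ∧ (∀ i n, 0 ≤ p i n) ∧
  (∀ i n, Broadcast α i n →
    Q ≤ T i n * (B * Real.logb 2 (1 + p i n * Heq i n / N0))) ∧
  ∑ i, ∑ n, T i n * p i n ≤ E

open Finset Function

/-! If a rate constraint were slack at an optimum, shrinking that block's latency to
`Q / rate` would keep every rate constraint, could only lower the energy (powers are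
nonnegative), and would strictly lower the total latency. -/

lemma sum_sum_lt_of_le_of_lt {ι κ M : Type*} [Fintype ι] [Fintype κ] [AddCommMonoid M]
    [PartialOrder M] [IsOrderedCancelAddMonoid M] {f g : ι → κ → M}
    (hle : ∀ i j, f i j ≤ g i j) {i : ι} {j : κ} (hlt : f i j < g i j) :
    ∑ i, ∑ j, f i j < ∑ i, ∑ j, g i j :=
  sum_lt_sum (fun i _ => sum_le_sum fun j _ => hle i j)
    ⟨i, mem_univ i, sum_lt_sum (fun j _ => hle i j) ⟨j, mem_univ j, hlt⟩⟩

lemma update_update_apply {ι κ α : Type*} [DecidableEq ι] [DecidableEq κ]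
    (f : ι → κ → α) (i : ι) (j : κ) (a : α) (i' : ι) (j' : κ) :
    update f i (update (f i) j a) i' j' = if i' = i ∧ j' = j then a else f i' j' := by
  by_cases hi : i' = i
  · subst hi
    simp [update_apply]
  · simp [hi]

lemma update_update_le {ι κ α : Type*} [DecidableEq ι] [DecidableEq κ] [Preorder α]
    {f : ι → κ → α} {i : ι} {j : κ} {a : α} (ha : a ≤ f i j) (i' : ι) (j' : κ) :
    update f i (update (f i) j a) i' j' ≤ f i' j' := by
  rw [update_update_apply]
  split_ifs with h
  · obtain ⟨rfl, rfl⟩ := h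
    exact ha
  · exact le_rfl

lemma P31Feasible.update_latency {K N : ℕ} {Q B N0 E : ℝ}
    {α : Fin (K+1) → Fin (N+1) → Fin (K+1) → ℝ} {Heq T p : Fin (K+1) → Fin (N+1) → ℝ}
    (hfeas : P31Feasible Q B N0 E α Heq T p) {i : Fin (K+1)} {n : Fin (N+1)} {t : ℝ}
    (ht : 0 ≤ t) (htT : t ≤ T i n)
    (hrate : Q ≤ t * (B * Real.logb 2 (1 + p i n * Heq i n / N0))) :
    P31Feasible Q B N0 E α Heq (update T i (update (T i) n t)) p := by
  obtain ⟨hT, hp, hrateT, henergy⟩ := hfeas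
  refine ⟨fun i' n' => ?_, hp, fun i' n' hbc => ?_, ?_⟩
  · rw [update_update_apply]
    split_ifs
    exacts [ht, hT i' n']
  · rw [update_update_apply]
    split_ifs with h
    · obtain ⟨rfl, rfl⟩ := h
      exact hrate
    · exact hrateT i' n' hbc
  · refine le_trans (sum_le_sum fun i' _ => sum_le_sum fun n' _ => ?_) henergy
    exact mul_le_mul_of_nonneg_right (update_update_le htT i' n') (hp i' n')

lemma P31Feasible.exists_lt_of_rate_slack {K N : ℕ} {Q B N0 E : ℝ} (hQ : 0 ≤ Q)
    {α : Fin (K+1) → Fin (N+1) → Fin (K+1) → ℝ} {Heq T p : Fin (K+1) → Fin (N+1) → ℝ}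
    (hfeas : P31Feasible Q B N0 E α Heq T p) {i : Fin (K+1)} {n : Fin (N+1)}
    (hslack : Q < T i n * (B * Real.logb 2 (1 + p i n * Heq i n / N0))) :
    ∃ T', P31Feasible Q B N0 E α Heq T' p ∧ ∑ i, ∑ n, T' i n < ∑ i, ∑ n, T i n := by
  set R := B * Real.logb 2 (1 + p i n * Heq i n / N0)
  have hR : 0 < R := pos_of_mul_pos_right (hQ.trans_lt hslack) (hfeas.1 i n)
  have hlt : Q / R < T i n := (div_lt_iff₀ hR).2 hslack
  refine ⟨update T i (update (T i) n (Q / R)),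
    hfeas.update_latency (div_nonneg hQ hR.le) hlt.le (div_mul_cancel₀ Q hR.ne').ge, ?_⟩
  exact sum_sum_lt_of_le_of_lt (update_update_le hlt.le) (i := i) (j := n) (by simpa using hlt)

theorem binding_rate_constraints_general {K N : ℕ}
    (Q B N0 E : ℝ) (hQ : 0 < Q)
    (α : Fin (K+1) → Fin (N+1) → Fin (K+1) → ℝ)
    (Heq : Fin (K+1) → Fin (N+1) → ℝ)
    (Tstar pstar : Fin (K+1) → Fin (N+1) → ℝ)
    (hfeas : P31Feasible Q B N0 E α Heq Tstar pstar)
    (hopt : ∀ T p : Fin (K+1) → Fin (N+1) → ℝ,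
      P31Feasible Q B N0 E α Heq T p →
      ∑ i, ∑ n, Tstar i n ≤ ∑ i, ∑ n, T i n) :
    ∀ i n, Broadcast α i n →
      Tstar i n * (B * Real.logb 2 (1 + pstar i n * Heq i n / N0)) = Q := by
  intro i n hbc
  refine le_antisymm (not_lt.1 fun hslack => ?_) (hfeas.2.2.1 i n hbc)
  obtain ⟨T', hT', hlt⟩ := hfeas.exists_lt_of_rate_slack hQ.le hslack
  exact (hopt T' pstar hT').not_gt hlt

/-- **Binding rate constraints at the optimum.**
Assume `Q, B, N0 > 0` and `H_{i,n} > 0` for every broadcast block.  If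
`(T*, p*)` is an optimal solution of problem (P3.1), then for every broadcast
block `(i,n)` the rate constraint holds with equality:
`T*_{i,n} * B * log₂(1 + p*_{i,n} H_{i,n} / N0) = Q`. -/
theorem binding_rate_constraints {K N : ℕ}
    (Q B N0 E : ℝ) (hQ : 0 < Q) (hB : 0 < B) (hN0 : 0 < N0) (hE : 0 < E)
    (α : Fin (K+1) → Fin (N+1) → Fin (K+1) → ℝ) (hα : IsBinary α)
    (Heq : Fin (K+1) → Fin (N+1) → ℝ)
    (hHeq : ∀ i n, Broadcast α i n → 0 < Heq i n)
    (Tstar pstar : Fin (K+1) → Fin (N+1) → ℝ)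
    (hfeas : P31Feasible Q B N0 E α Heq Tstar pstar)
    (hopt : ∀ T p : Fin (K+1) → Fin (N+1) → ℝ,
      P31Feasible Q B N0 E α Heq T p →
      ∑ i, ∑ n, Tstar i n ≤ ∑ i, ∑ n, T i n) :
    ∀ i n, Broadcast α i n →
      Tstar i n * (B * Real.logb 2 (1 + pstar i n * Heq i n / N0)) = Q :=
  binding_rate_constraints_general Q B N0 E hQ α Heq Tstar pstar hfeas hopt
end
end

section
/- Binding energy constraint at the optimum: assume Q, B, N_0 > 0, H_{i,n} > 0 for every broadcast block, and that at least one block is broadcast. If ({T*_{i,n}}, {p*_{i,n}}) is an optimal solution of problem (P3.1), then the energy budget is exhausted: Σ_{i,n} T*_{i,n}·p*_{i,n} = E. -/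
noncomputable section

/-!
If the energy budget had slack `ε > 0` at an optimum, pick a broadcast block and raise its power
by `ε / T*`. The rate constraint then holds with a strictly shorter latency, and the extra energy
is at most `T* · ε / T* = ε`, so the modified point is feasible with smaller total latency.
-/

open Finset Real

section ReplaceBlock

variable {ι κ : Type*} [DecidableEq ι] [DecidableEq κ]

def replaceBlock {M : Type*} (f : ι → κ → M) (i₀ : ι) (n₀ : κ) (c : M) : ι → κ → M :=
  fun i n => if (i, n) = (i₀, n₀) then c else f i n

variable [Fintype ι] [Fintype κ]

theorem sum_sum_eq_of_eq_off {M : Type*} [AddCommGroup M] {f g : ι → κ → M} {i₀ : ι} {n₀ : κ}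
    (h : ∀ i n, (i, n) ≠ (i₀, n₀) → f i n = g i n) :
    ∑ i, ∑ n, g i n = ∑ i, ∑ n, f i n - f i₀ n₀ + g i₀ n₀ := by
  simp only [← Fintype.sum_prod_type']
  rw [Fintype.sum_eq_add_sum_compl (i₀, n₀), Fintype.sum_eq_add_sum_compl (i₀, n₀)
    (fun x => f x.1 x.2), sum_congr rfl fun x hx => (h x.1 x.2 (by simpa using hx)).symm]
  abel

theorem sum_sum_replaceBlock_mul {R : Type*} [Ring R] (T p : ι → κ → R) (i₀ : ι) (n₀ : κ)
    (t q : R) :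
    ∑ i, ∑ n, replaceBlock T i₀ n₀ t i n * replaceBlock p i₀ n₀ q i n
      = ∑ i, ∑ n, T i n * p i n - T i₀ n₀ * p i₀ n₀ + t * q := by
  rw [sum_sum_eq_of_eq_off (f := fun i n => T i n * p i n) (i₀ := i₀) (n₀ := n₀) fun i n h => by
    simp [replaceBlock, h]]
  simp [replaceBlock]

theorem sum_sum_replaceBlock {M : Type*} [AddCommGroup M] (T : ι → κ → M) (i₀ : ι) (n₀ : κ)
    (t : M) :
    ∑ i, ∑ n, replaceBlock T i₀ n₀ t i n = ∑ i, ∑ n, T i n - T i₀ n₀ + t := by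
  rw [sum_sum_eq_of_eq_off (f := T) (i₀ := i₀) (n₀ := n₀) fun i n h => by
    simp [replaceBlock, h]]
  simp [replaceBlock]

end ReplaceBlock

theorem exists_faster_block_of_energy_slack {Q B N0 H T p ε : ℝ} (hQ : 0 < Q) (hB : 0 < B)
    (hN0 : 0 < N0) (hH : 0 < H) (hT : 0 ≤ T) (hp : 0 ≤ p)
    (hrate : Q ≤ T * (B * logb 2 (1 + p * H / N0))) (hε : 0 < ε) :
    ∃ t q, 0 ≤ t ∧ 0 ≤ q ∧ t < T ∧ t * q ≤ T * p + ε ∧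
      Q ≤ t * (B * logb 2 (1 + q * H / N0)) := by
  have hTpos : 0 < T := by
    refine hT.lt_of_ne fun h => ?_
    rw [← h, zero_mul] at hrate
    linarith
  set q := p + ε / T
  set L := logb 2 (1 + p * H / N0)
  set L' := logb 2 (1 + q * H / N0)
  have hq : p < q := lt_add_of_pos_right p (div_pos hε hTpos)
  have hL : 0 < L := pos_of_mul_pos_right (pos_of_mul_pos_right (hQ.trans_le hrate) hT) hB.le
  have hLL' : L < L' := logb_lt_logb one_lt_two (by positivity) (by gcongr)
  have hBL' : 0 < B * L' := mul_pos hB (hL.trans hLL')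
  have htT : Q / (B * L') < T := by
    rw [div_lt_iff₀ hBL']
    calc Q ≤ T * (B * L) := hrate
      _ < T * (B * L') := by gcongr
  refine ⟨Q / (B * L'), q, (div_pos hQ hBL').le, hp.trans hq.le, htT, ?_, ?_⟩
  · calc Q / (B * L') * q ≤ T * q := by gcongr
      _ = T * p + ε := by rw [mul_add, mul_div_cancel₀ ε hTpos.ne']
  · rw [div_mul_cancel₀ Q hBL'.ne']

theorem P31Feasible.replaceBlock {K N : ℕ} {Q B N0 E : ℝ}
    {α : Fin (K+1) → Fin (N+1) → Fin (K+1) → ℝ} {Heq T p : Fin (K+1) → Fin (N+1) → ℝ}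
    (h : P31Feasible Q B N0 E α Heq T p) (i₀ : Fin (K+1)) (n₀ : Fin (N+1)) {t q : ℝ}
    (ht : 0 ≤ t) (hq : 0 ≤ q) (hrate : Q ≤ t * (B * logb 2 (1 + q * Heq i₀ n₀ / N0)))
    (henergy : t * q ≤ T i₀ n₀ * p i₀ n₀ + (E - ∑ i, ∑ n, T i n * p i n)) :
    P31Feasible Q B N0 E α Heq (replaceBlock T i₀ n₀ t) (replaceBlock p i₀ n₀ q) := by
  obtain ⟨hT, hp, hrates, -⟩ := h
  refine ⟨fun i n => ?_, fun i n => ?_, fun i n hb => ?_, ?_⟩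
  · simp only [_root_.replaceBlock]; split_ifs
    exacts [ht, hT i n]
  · simp only [_root_.replaceBlock]; split_ifs
    exacts [hq, hp i n]
  · simp only [_root_.replaceBlock]; split_ifs with h
    · obtain ⟨rfl, rfl⟩ := Prod.mk.inj h
      exact hrate
    · exact hrates i n hb
  · rw [sum_sum_replaceBlock_mul]
    linarith

theorem binding_energy_constraint_general {K N : ℕ}
    (Q B N0 E : ℝ) (hQ : 0 < Q) (hB : 0 < B) (hN0 : 0 < N0)
    (α : Fin (K+1) → Fin (N+1) → Fin (K+1) → ℝ)
    (Heq : Fin (K+1) → Fin (N+1) → ℝ)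
    (hHeq : ∀ i n, Broadcast α i n → 0 < Heq i n)
    (hsome : ∃ i n, Broadcast α i n)
    (Tstar pstar : Fin (K+1) → Fin (N+1) → ℝ)
    (hfeas : P31Feasible Q B N0 E α Heq Tstar pstar)
    (hopt : ∀ T p : Fin (K+1) → Fin (N+1) → ℝ,
      P31Feasible Q B N0 E α Heq T p →
      ∑ i, ∑ n, Tstar i n ≤ ∑ i, ∑ n, T i n) :
    ∑ i, ∑ n, Tstar i n * pstar i n = E := by
  have ⟨hT, hp, hrate, hbudget⟩ := hfeas
  refine hbudget.eq_of_not_lt fun hslack => ?_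
  obtain ⟨i₀, n₀, hb⟩ := hsome
  obtain ⟨t, q, ht, hq, htT, henergy, hrate'⟩ := exists_faster_block_of_energy_slack hQ hB hN0
    (hHeq i₀ n₀ hb) (hT i₀ n₀) (hp i₀ n₀) (hrate i₀ n₀ hb) (sub_pos.2 hslack)
  have hle := hopt _ _ (hfeas.replaceBlock i₀ n₀ ht hq hrate' henergy)
  rw [sum_sum_replaceBlock] at hle
  linarith

/-- **Binding energy constraint at the optimum.**
Assume `Q, B, N0 > 0`, `H_{i,n} > 0` for every broadcast block, and that at least
one block is broadcast.  If `(T*, p*)` is an optimal solution of problem (P3.1),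
then the energy budget is exhausted: `Σ_{i,n} T*_{i,n} * p*_{i,n} = E`. -/
theorem binding_energy_constraint {K N : ℕ}
    (Q B N0 E : ℝ) (hQ : 0 < Q) (hB : 0 < B) (hN0 : 0 < N0) (hE : 0 < E)
    (α : Fin (K+1) → Fin (N+1) → Fin (K+1) → ℝ) (hα : IsBinary α)
    (Heq : Fin (K+1) → Fin (N+1) → ℝ)
    (hHeq : ∀ i n, Broadcast α i n → 0 < Heq i n)
    (hsome : ∃ i n, Broadcast α i n)
    (Tstar pstar : Fin (K+1) → Fin (N+1) → ℝ)
    (hfeas : P31Feasible Q B N0 E α Heq Tstar pstar)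
    (hopt : ∀ T p : Fin (K+1) → Fin (N+1) → ℝ,
      P31Feasible Q B N0 E α Heq T p →
      ∑ i, ∑ n, Tstar i n ≤ ∑ i, ∑ n, T i n) :
    ∑ i, ∑ n, Tstar i n * pstar i n = E :=
  binding_energy_constraint_general Q B N0 E hQ hB hN0 α Heq hHeq hsome Tstar pstar hfeas hopt
end
end

section
/- Strict convexity of the minimal-energy function: for reals H, N_0, B, Q > 0, the function g(T) = (N_0/H)·T·(2^{Q/(BT)} − 1) is strictly convex on (0, ∞). -/
open Real Set Filter

lemma me_d1 (k : ℝ) {x : ℝ} (hx : x ≠ 0) :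
    HasDerivAt (fun t : ℝ => t * Real.exp (k / t))
      (Real.exp (k / x) * (1 - k / x)) x := by
  have h1 : HasDerivAt (fun t : ℝ => k / t) (-(k / x ^ 2)) x := by
    simpa [div_eq_mul_inv, mul_comm, neg_mul, mul_neg] using
      ((hasDerivAt_inv hx).const_mul k)
  have h3 := (hasDerivAt_id x).mul h1.exp
  refine h3.congr_deriv ?_
  simp only [id]
  field_simp
  ring

lemma me_d2 (k : ℝ) {x : ℝ} (hx : x ≠ 0) :
    HasDerivAt (fun t : ℝ => Real.exp (k / t) * (1 - k / t))
      (Real.exp (k / x) * (k ^ 2 / x ^ 3)) x := by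
  have h1 : HasDerivAt (fun t : ℝ => k / t) (-(k / x ^ 2)) x := by
    simpa [div_eq_mul_inv, mul_comm, neg_mul, mul_neg] using
      ((hasDerivAt_inv hx).const_mul k)
  have h4 : HasDerivAt (fun t : ℝ => 1 - k / t) (k / x ^ 2) x := by
    simpa using h1.const_sub 1
  have h5 := h1.exp.mul h4
  refine h5.congr_deriv ?_
  field_simp
  ring

lemma me_smul {s : Set ℝ} {f : ℝ → ℝ} {c : ℝ} (hc : 0 < c)
    (hf : StrictConvexOn ℝ s f) : StrictConvexOn ℝ s (fun x => c * f x) := by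
  refine ⟨hf.1, fun x hx y hy hxy a b ha hb hab => ?_⟩
  have h := hf.2 hx hy hxy ha hb hab
  simp only [smul_eq_mul] at *
  nlinarith [h]

lemma me_aux {k : ℝ} (hk : 0 < k) :
    StrictConvexOn ℝ (Ioi 0) (fun x : ℝ => x * Real.exp (k / x)) := by
  apply strictConvexOn_of_deriv2_pos (convex_Ioi 0)
  · exact continuousOn_id.mul
      ((continuousOn_const.div continuousOn_id fun x hx => ne_of_gt hx).rexp)
  · intro x hx
    rw [interior_Ioi] at hx
    have hx0 : x ≠ 0 := ne_of_gt hx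
    have hder : deriv (deriv (fun t : ℝ => t * Real.exp (k / t))) x
        = Real.exp (k / x) * (k ^ 2 / x ^ 3) := by
      have heq : deriv (fun t : ℝ => t * Real.exp (k / t)) =ᶠ[nhds x]
          (fun t : ℝ => Real.exp (k / t) * (1 - k / t)) := by
        filter_upwards [Ioi_mem_nhds hx] with y hy
        exact (me_d1 k (ne_of_gt hy)).deriv
      rw [heq.deriv_eq]
      exact (me_d2 k hx0).deriv
    simp only [Function.iterate_succ, Function.iterate_zero, Function.comp_apply, id_eq]
    rw [hder]
    have hxp : (0:ℝ) < x := hx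
    positivity

/-- **Strict convexity of the minimal-energy function.**
For reals `H, N0, B, Q > 0`, the minimal-energy function
`g(T) = (N0/H) * T * (2^(Q/(B*T)) - 1)` is strictly convex on `(0, ∞)`. -/
theorem minimal_energy_strictConvexOn (H N0 B Q : ℝ)
    (hH : 0 < H) (hN0 : 0 < N0) (hB : 0 < B) (hQ : 0 < Q) :
    StrictConvexOn ℝ (Set.Ioi 0)
      (fun T : ℝ => (N0 / H) * T * ((2 : ℝ) ^ (Q / (B * T)) - 1)) := by
  set c : ℝ := N0 / H with hc
  have hcpos : 0 < c := div_pos hN0 hH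
  set k : ℝ := Q * Real.log 2 / B with hk
  have hkpos : 0 < k := div_pos (mul_pos hQ (Real.log_pos one_lt_two)) hB
  have hmain := me_smul hcpos (me_aux hkpos)
  have hlin : ConvexOn ℝ (Ioi (0:ℝ)) (fun T : ℝ => -c * T) := by
    refine ⟨convex_Ioi 0, fun x _ y _ a b _ _ _ => le_of_eq ?_⟩
    simp only [smul_eq_mul]
    ring
  have := hmain.add_convexOn hlin
  refine (congrArg (StrictConvexOn ℝ (Ioi 0)) ?_).mpr this
  funext T
  have h2 : (2 : ℝ) ^ (Q / (B * T)) = Real.exp (k / T) := by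
    rw [Real.rpow_def_of_pos two_pos]
    congr 1
    rw [hk]
    ring
  simp only [Pi.add_apply, h2]
  ring
end
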